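/- (Theorem 2, existence form.) Let A : ℝ → Matrix (Fin n) (Fin n) ℂ be a matrix flow, and suppose there exist an invertible matrix C and f : Fin n → Fin ℓ such that C * (A t) * C⁻¹ is block-diagonal with respect to f for every t : ℝ. Fix t_a : ℝ and assume A t_a is diagonalizable (there exists an invertible matrix P with P⁻¹ * (A t_a) * P diagonal). Then there exist an invertible matrix W and a function g : Fin n → Fin ℓ such that W⁻¹ * (A t_a) * W is diagonal, W⁻¹ * (A t) * W is block-diagonal with respect to g for every t : ℝ, and for each k : Fin ℓ the number of indices j with g j = k equals the number of indices i with f i = k. -/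

import Mathlib

/-!
Conjugating by `C` makes every `A t` block-diagonal, so it suffices to diagonalize the
block-diagonal, diagonalizable matrix `M = C * A t_a * C⁻¹` by a block-diagonal `Q`: then
`W = C⁻¹ * Q` works with `g = f`, because block-diagonal matrices are exactly those commuting
with the coordinate projections onto the blocks, hence closed under products and inverses.
Such a `Q` exists because the projections onto block `k` of the eigenvector columns of a
diagonalizer of `M` are again eigenvectors of `M` (the projection commutes with `M`) and span
that block; so each block has an eigenbasis, and these bases together form the columns of `Q`.
-/

open Matrix

theorem Module.Basis.exists_mem_of_span_eq {K V : Type*} [DivisionRing K] [AddCommGroup V]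
    [Module K V] {s : Set V} {W : Submodule K V} [FiniteDimensional K W]
    (hs : Submodule.span K s = W)
    {α : Type*} [Fintype α] (hα : Fintype.card α = Module.finrank K W) :
    ∃ b : Module.Basis α K W, ∀ a, (b a : V) ∈ s := by
  subst hs
  have hspan := (Submodule.span_span_coe_preimage (R := K) (s := s)).ge
  let b := Module.Basis.ofSpan hspan
  let e : α ≃ _ := (Fintype.equivFinOfCardEq hα).trans ((Module.finBasis K _).indexEquiv b)
  refine ⟨b.reindex e.symm, fun a => ?_⟩
  rw [Module.Basis.reindex_apply, Equiv.symm_symm]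
  exact Module.Basis.ofSpan_subset hspan (Set.mem_range_self _)

namespace Matrix

variable {ι κ R K : Type*}

def IsBlockDiagonal [Zero R] (f : ι → κ) (M : Matrix ι ι R) : Prop :=
  ∀ i j, f i ≠ f j → M i j = 0

def blockProjection [Zero R] [One R] [DecidableEq ι] [DecidableEq κ] (f : ι → κ) (k : κ) :
    Matrix ι ι R :=
  diagonal fun i => if f i = k then 1 else 0

section Semiring

variable [Fintype ι] [DecidableEq ι] [DecidableEq κ] [Semiring R] {f : ι → κ}
  {M N : Matrix ι ι R}

theorem isBlockDiagonal_iff_forall_commute :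
    IsBlockDiagonal f M ↔ ∀ k, Commute M (blockProjection f k) := by
  refine ⟨fun hM k => ?_, fun h i j hij => ?_⟩
  · ext i j
    simp only [blockProjection, mul_diagonal, diagonal_mul]
    by_cases hij : f i = f j
    · rw [hij]; split_ifs <;> simp
    · simp [hM i j hij]
  · simpa [blockProjection, hij] using congr_fun₂ (h (f j)) i j

theorem IsBlockDiagonal.mul (hM : IsBlockDiagonal f M) (hN : IsBlockDiagonal f N) :
    IsBlockDiagonal f (M * N) :=
  isBlockDiagonal_iff_forall_commute.2 fun k =>
    (isBlockDiagonal_iff_forall_commute.1 hM k).mul_left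
      (isBlockDiagonal_iff_forall_commute.1 hN k)

end Semiring

section CommRing

variable [Fintype ι] [DecidableEq ι] [CommRing R]

theorem IsBlockDiagonal.inv [DecidableEq κ] {f : ι → κ} {M : Matrix ι ι R}
    (hM : IsBlockDiagonal f M) : IsBlockDiagonal f M⁻¹ := by
  by_cases h : IsUnit M
  · obtain ⟨u, rfl⟩ := h
    rw [← coe_units_inv]
    exact isBlockDiagonal_iff_forall_commute.2 fun k =>
      (isBlockDiagonal_iff_forall_commute.1 hM k).units_inv_left
  · rw [nonsing_inv_eq_ringInverse, Ring.inverse_non_unit _ h]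
    intro i j _
    rfl

theorem inv_mul_mul_eq_inv_mul_conj_mul {C : Matrix ι ι R} (hC : IsUnit C)
    (Q X : Matrix ι ι R) :
    (C⁻¹ * Q)⁻¹ * X * (C⁻¹ * Q) = Q⁻¹ * (C * X * C⁻¹) * Q := by
  rw [mul_inv_rev, nonsing_inv_nonsing_inv _ ((isUnit_iff_isUnit_det C).1 hC)]
  simp only [Matrix.mul_assoc]

theorem mul_eq_mul_diagonal_iff {M Q : Matrix ι ι R} {μ : ι → R} :
    M * Q = Q * diagonal μ ↔ ∀ j, M *ᵥ Q.col j = μ j • Q.col j := by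
  simp only [← Matrix.ext_iff, funext_iff, mul_diagonal, Pi.smul_apply, smul_eq_mul, col_apply]
  refine forall_comm.trans (forall_congr' fun j => forall_congr' fun i => ?_)
  rw [mul_comm (μ j)]
  rfl

theorem isDiag_inv_mul_mul_iff {M Q : Matrix ι ι R} (hQ : IsUnit Q) :
    (Q⁻¹ * M * Q).IsDiag ↔ ∃ μ : ι → R, ∀ j, M *ᵥ Q.col j = μ j • Q.col j := by
  have := hQ.invertible
  simp only [← mul_eq_mul_diagonal_iff, Matrix.mul_assoc, ← inv_mul_eq_iff_eq_mul_of_invertible]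
  exact ⟨fun h => ⟨_, (isDiag_iff_diagonal_diag _).1 h |>.symm⟩,
    fun ⟨μ, h⟩ => h ▸ isDiag_diagonal μ⟩

end CommRing

section Field

variable [Fintype ι] [DecidableEq ι] [Field K]

variable (K) in
def blockSubspace [DecidableEq κ] (f : ι → κ) (k : κ) : Submodule K (ι → K) :=
  LinearMap.range (blockProjection f k : Matrix ι ι K).mulVecLin

variable [DecidableEq κ] {f : ι → κ}

theorem finrank_blockSubspace (k : κ) :
    Module.finrank K (blockSubspace K f k) = Fintype.card {i // f i = k} := by
  classical
  rw [blockSubspace, ← rank, blockProjection, rank_diagonal]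
  exact Fintype.card_congr (Equiv.subtypeEquivRight fun i => by simp)

theorem apply_eq_zero_of_mem_blockSubspace {k : κ} {v : ι → K} (hv : v ∈ blockSubspace K f k)
    {i : ι} (hi : f i ≠ k) : v i = 0 := by
  obtain ⟨w, rfl⟩ := hv
  simp [blockProjection, mulVec_diagonal, hi]

theorem single_mem_blockSubspace (i : ι) : Pi.single i 1 ∈ blockSubspace K f (f i) :=
  ⟨Pi.single i 1, by simp [blockProjection]⟩

theorem span_blockProjection_cols {P : Matrix ι ι K} (hP : IsUnit P) (k : κ) :
    Submodule.span K (Set.range fun j => blockProjection f k *ᵥ P.col j) =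
      blockSubspace K f k := by
  have hspan : Submodule.span K (Set.range P.col) = ⊤ :=
    (linearIndependent_cols_iff_isUnit.2 hP).span_eq_top_of_card_eq_finrank' (by simp)
  rw [blockSubspace, LinearMap.range_eq_map, ← hspan, ← Submodule.span_image,
    ← Set.range_comp]
  rfl

theorem IsBlockDiagonal.exists_basis_blockSubspace_eigenvectors {M P : Matrix ι ι K}
    (hM : IsBlockDiagonal f M) (hP : IsUnit P) (hPM : (P⁻¹ * M * P).IsDiag) (k : κ) :
    ∃ b : Module.Basis {i // f i = k} K (blockSubspace K f k),
      ∀ a, ∃ c : K, M *ᵥ (b a : ι → K) = c • (b a : ι → K) := by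
  obtain ⟨μ, hμ⟩ := (isDiag_inv_mul_mul_iff hP).1 hPM
  obtain ⟨b, hb⟩ := Module.Basis.exists_mem_of_span_eq (span_blockProjection_cols hP k)
    (finrank_blockSubspace (f := f) k).symm
  refine ⟨b, fun a => ?_⟩
  obtain ⟨j, hj⟩ := hb a
  refine ⟨μ j, ?_⟩
  rw [← hj, mulVec_mulVec, (isBlockDiagonal_iff_forall_commute.1 hM k).eq, ← mulVec_mulVec, hμ,
    mulVec_smul]

theorem IsBlockDiagonal.exists_isBlockDiagonal_isDiag_inv_mul_mul {M P : Matrix ι ι K}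
    (hM : IsBlockDiagonal f M) (hP : IsUnit P) (hPM : (P⁻¹ * M * P).IsDiag) :
    ∃ Q : Matrix ι ι K, IsUnit Q ∧ IsBlockDiagonal f Q ∧ (Q⁻¹ * M * Q).IsDiag := by
  choose b hb using hM.exists_basis_blockSubspace_eigenvectors hP hPM
  let q : ι → ι → K := fun j => b (f j) ⟨j, rfl⟩
  have hbq : ∀ k (a : {i // f i = k}), (b k a : ι → K) = q a := by
    rintro k ⟨j, rfl⟩
    rfl
  have hspan : ⊤ ≤ Submodule.span K (Set.range q) := by
    rw [← (Pi.basisFun K ι).span_eq, Submodule.span_le]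
    rintro - ⟨i, rfl⟩
    have hblock : blockSubspace K f (f i) ≤ Submodule.span K (Set.range q) := by
      rw [← Submodule.map_subtype_top (blockSubspace K f (f i)), ← (b (f i)).span_eq,
        Submodule.map_span, ← Set.range_comp]
      exact Submodule.span_mono (Set.range_subset_iff.2 fun a => ⟨a, (hbq _ a).symm⟩)
    simpa using hblock (single_mem_blockSubspace i)
  let Q : Matrix ι ι K := (of q)ᵀ
  have hQ : IsUnit Q := linearIndependent_cols_iff_isUnit.1 <|
    linearIndependent_of_top_le_span_of_card_eq_finrank hspan (by simp)
  choose μ hμ using fun j => hb (f j) ⟨j, rfl⟩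
  exact ⟨Q, hQ, fun i j hij => apply_eq_zero_of_mem_blockSubspace (b (f j) ⟨j, rfl⟩).2 hij,
    (isDiag_inv_mul_mul_iff hQ).2 ⟨μ, hμ⟩⟩

end Field

end Matrix

/-- Theorem 2 (existence form): for a general flow uniformly block-diagonalized by a
constant similarity, with `A t_a` diagonalizable, there is an eigenvector matrix of
`A t_a` that block-diagonalizes every flow matrix. -/
theorem general_flow_eigenvector_blockDiagonalizes
    {n ℓ : ℕ} (A : ℝ → Matrix (Fin n) (Fin n) ℂ)
    (C : Matrix (Fin n) (Fin n) ℂ) (hC : IsUnit C)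
    (f : Fin n → Fin ℓ)
    (hblock : ∀ t, ∀ i j, f i ≠ f j → (C * A t * C⁻¹) i j = 0)
    (t_a : ℝ)
    (hdiag : ∃ P : Matrix (Fin n) (Fin n) ℂ, IsUnit P ∧
      ∀ i j, i ≠ j → (P⁻¹ * A t_a * P) i j = 0) :
    ∃ (W : Matrix (Fin n) (Fin n) ℂ) (g : Fin n → Fin ℓ),
      IsUnit W ∧
      (∀ i j, i ≠ j → (W⁻¹ * A t_a * W) i j = 0) ∧
      (∀ t, ∀ i j, g i ≠ g j → (W⁻¹ * A t * W) i j = 0) ∧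
      (∀ k : Fin ℓ,
        (Finset.univ.filter fun j => g j = k).card =
          (Finset.univ.filter fun i => f i = k).card) := by
  obtain ⟨P, hP, hPdiag⟩ := hdiag
  have hconj := inv_mul_mul_eq_inv_mul_conj_mul hC
  have hCP : ((C * P)⁻¹ * (C * A t_a * C⁻¹) * (C * P)).IsDiag := by
    rw [← hconj, nonsing_inv_mul_cancel_left C P ((isUnit_iff_isUnit_det C).1 hC)]
    exact hPdiag
  obtain ⟨Q, hQ, hQblock, hQdiag⟩ :=
    IsBlockDiagonal.exists_isBlockDiagonal_isDiag_inv_mul_mul (hblock t_a) (hC.mul hP) hCP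
  refine ⟨C⁻¹ * Q, f, (isUnit_nonsing_inv_iff.2 hC).mul hQ, ?_, fun t => ?_, fun k => rfl⟩
  · rw [hconj]
    exact hQdiag
  · rw [hconj]
    exact (hQblock.inv.mul (hblock t)).mul hQblock
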